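/- Let $B = \begin{bmatrix} D & C \\ -C^\top & 0 \end{bmatrix}$ where $D \in \mathbb{R}^{n\times n}$ is symmetric positive definite and $C \in \mathbb{R}^{n \times m}$ has full column rank. Then every eigenvalue $\mu$ of $B$ satisfies $\operatorname{Re}(\mu) > 0$. -/

import Mathlib

/-!
Write an eigenvector as `v = (ζ, w)`. Since `B` is real, `Re (vᴴ B v) = xᵀ B x + yᵀ B y` with
`x = Re v`, `y = Im v`, and the skew-symmetric off-diagonal part of `B` drops out of each real
quadratic form, leaving `Re μ · ‖v‖² = (Re ζ)ᵀ D (Re ζ) + (Im ζ)ᵀ D (Im ζ)`. This is positive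
because `ζ ≠ 0`: otherwise the first block row of `B v = μ v` reads `C w = 0`, so `w = 0` too.
-/

open Matrix
open scoped ComplexOrder

namespace Matrix

variable {ι κ : Type*} [Fintype κ]

lemma re_comp_mulVec_map_ofReal (A : Matrix ι κ ℝ) (v : κ → ℂ) :
    Complex.re ∘ (A.map Complex.ofReal *ᵥ v) = A *ᵥ (Complex.re ∘ v) := by
  ext i
  simp [mulVec, dotProduct, Complex.re_sum]

lemma im_comp_mulVec_map_ofReal (A : Matrix ι κ ℝ) (v : κ → ℂ) :
    Complex.im ∘ (A.map Complex.ofReal *ᵥ v) = A *ᵥ (Complex.im ∘ v) := by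
  ext i
  simp [mulVec, dotProduct, Complex.im_sum]

lemma injective_mulVec_map_ofReal {A : Matrix ι κ ℝ} (hA : Function.Injective A.mulVec) :
    Function.Injective (A.map Complex.ofReal).mulVec := by
  intro v w h
  have hre : Complex.re ∘ v = Complex.re ∘ w := hA <| by
    simp only [← re_comp_mulVec_map_ofReal, h]
  have him : Complex.im ∘ v = Complex.im ∘ w := hA <| by
    simp only [← im_comp_mulVec_map_ofReal, h]
  funext j
  exact Complex.ext (congrFun hre j) (congrFun him j)

lemma re_star_dotProduct (v w : κ → ℂ) :
    (star v ⬝ᵥ w).re =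
      (Complex.re ∘ v) ⬝ᵥ (Complex.re ∘ w) + (Complex.im ∘ v) ⬝ᵥ (Complex.im ∘ w) := by
  simp [dotProduct, Complex.re_sum, Finset.sum_add_distrib]

lemma re_star_dotProduct_map_ofReal_mulVec (A : Matrix κ κ ℝ) (v : κ → ℂ) :
    (star v ⬝ᵥ A.map Complex.ofReal *ᵥ v).re =
      (Complex.re ∘ v) ⬝ᵥ A *ᵥ (Complex.re ∘ v) + (Complex.im ∘ v) ⬝ᵥ A *ᵥ (Complex.im ∘ v) := by
  rw [re_star_dotProduct, re_comp_mulVec_map_ofReal, im_comp_mulVec_map_ofReal]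

lemma PosDef.dotProduct_mulVec_re_add_im_pos {D : Matrix κ κ ℝ} (hD : D.PosDef) {ζ : κ → ℂ}
    (hζ : ζ ≠ 0) :
    0 < (Complex.re ∘ ζ) ⬝ᵥ D *ᵥ (Complex.re ∘ ζ) + (Complex.im ∘ ζ) ⬝ᵥ D *ᵥ (Complex.im ∘ ζ) := by
  have hnonneg (x : κ → ℝ) : 0 ≤ x ⬝ᵥ D *ᵥ x := by
    simpa using hD.posSemidef.dotProduct_mulVec_nonneg x
  have hpos {x : κ → ℝ} (hx : x ≠ 0) : 0 < x ⬝ᵥ D *ᵥ x := by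
    simpa using hD.dotProduct_mulVec_pos hx
  by_cases hre : Complex.re ∘ ζ = 0
  · have him : Complex.im ∘ ζ ≠ 0 := fun him =>
      hζ <| funext fun i => Complex.ext (congrFun hre i) (congrFun him i)
    exact add_pos_of_nonneg_of_pos (hnonneg _) (hpos him)
  · exact add_pos_of_pos_of_nonneg (hpos hre) (hnonneg _)

variable {R : Type*} {m n : Type*} [Fintype m] [Fintype n]

lemma dotProduct_fromBlocks_neg_transpose_zero_mulVec [CommRing R]
    (D : Matrix m m R) (C : Matrix m n R) (x : m ⊕ n → R) :
    x ⬝ᵥ fromBlocks D C (-Cᵀ) 0 *ᵥ x = (x ∘ Sum.inl) ⬝ᵥ D *ᵥ (x ∘ Sum.inl) := by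
  rw [← Sum.elim_comp_inl_inr x, fromBlocks_mulVec, sumElim_dotProduct_sumElim]
  simp only [Sum.elim_comp_inl, Sum.elim_comp_inr, neg_mulVec, zero_mulVec, add_zero,
    dotProduct_add, mulVec_transpose, dotProduct_mulVec (x ∘ Sum.inl),
    dotProduct_comm (x ∘ Sum.inr), neg_dotProduct, add_neg_cancel_right]

lemma comp_inl_ne_zero_of_fromBlocks_mulVec_eq_smul [Semiring R]
    {A : Matrix m m R} {C : Matrix m n R} {E : Matrix n m R} {F : Matrix n n R}
    (hC : Function.Injective C.mulVec) {μ : R} {v : m ⊕ n → R} (hv : v ≠ 0)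
    (h : fromBlocks A C E F *ᵥ v = μ • v) : v ∘ Sum.inl ≠ 0 := by
  intro hinl
  have hCw : C *ᵥ (v ∘ Sum.inr) = C *ᵥ 0 := by
    funext i
    have hrow := congrFun h (Sum.inl i)
    rw [← Sum.elim_comp_inl_inr v, fromBlocks_mulVec, hinl] at hrow
    simpa using hrow
  apply hv
  rw [← Sum.elim_comp_inl_inr v, hinl, hC hCw, Sum.elim_zero_zero]

end Matrix

/-- Every (complex) eigenvalue of `[[D, C], [-Cᵀ, 0]]` with `D` symmetric positive
definite and `C` of full column rank has strictly positive real part. -/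
theorem stmt5 {n m : ℕ} (D : Matrix (Fin n) (Fin n) ℝ) (C : Matrix (Fin n) (Fin m) ℝ)
    (hD : D.PosDef) (hC : Function.Injective C.mulVec) (μ : ℂ)
    (hμ : ∃ v : (Fin n ⊕ Fin m) → ℂ, v ≠ 0 ∧
      ((Matrix.fromBlocks D C (-Cᵀ) 0).map (Complex.ofReal)).mulVec v = μ • v) :
    0 < μ.re := by
  obtain ⟨v, hv0, hev⟩ := hμ
  have hζ : v ∘ Sum.inl ≠ 0 := comp_inl_ne_zero_of_fromBlocks_mulVec_eq_smul
    (injective_mulVec_map_ofReal hC) hv0 (by rwa [← fromBlocks_map])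
  have hnorm := Complex.pos_iff.1 (dotProduct_star_self_pos_iff.2 hv0)
  have key : μ.re * (star v ⬝ᵥ v).re =
      (Complex.re ∘ v ∘ Sum.inl) ⬝ᵥ D *ᵥ (Complex.re ∘ v ∘ Sum.inl) +
        (Complex.im ∘ v ∘ Sum.inl) ⬝ᵥ D *ᵥ (Complex.im ∘ v ∘ Sum.inl) := calc
    μ.re * (star v ⬝ᵥ v).re
      = (star v ⬝ᵥ (fromBlocks D C (-Cᵀ) 0).map Complex.ofReal *ᵥ v).re := by
        rw [hev, dotProduct_smul, smul_eq_mul, Complex.mul_re, ← hnorm.2]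
        ring
    _ = _ := by
        rw [re_star_dotProduct_map_ofReal_mulVec, dotProduct_fromBlocks_neg_transpose_zero_mulVec,
          dotProduct_fromBlocks_neg_transpose_zero_mulVec]
        rfl
  exact pos_of_mul_pos_left (key ▸ hD.dotProduct_mulVec_re_add_im_pos hζ) hnorm.1.le
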